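/- Let θ̄₀(x̄) be the unique root of θ − (1−δ)·Φ((x̄−θ)/σₓ) = 0. Then θ̄₀(x̄) → 0 as x̄ → −∞ and θ̄₀(x̄) → 1−δ as x̄ → +∞. -/
import Mathlib

open Real Filter Set MeasureTheory

/-- Standard normal probability density function. -/
noncomputable def stdPdf (t : ℝ) : ℝ := (Real.sqrt (2 * Real.pi))⁻¹ * Real.exp (-(t ^ 2) / 2)

/-- Standard normal cumulative distribution function. -/
noncomputable def stdCdf (x : ℝ) : ℝ := ∫ t in Set.Iic x, stdPdf t

lemma stdPdf_nonneg (t : ℝ) : 0 ≤ stdPdf t := by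
  unfold stdPdf
  positivity

lemma stdPdf_eq (t : ℝ) : stdPdf t = (Real.sqrt (2 * Real.pi))⁻¹ * Real.exp (-(1/2) * t ^ 2) := by
  unfold stdPdf; ring_nf

lemma stdPdf_integrable : Integrable stdPdf := by
  have h := (integrable_exp_neg_mul_sq (b := 1/2) (by norm_num)).const_mul
    ((Real.sqrt (2 * Real.pi))⁻¹)
  convert h using 2 with t
  rw [stdPdf_eq]

lemma integral_stdPdf : ∫ t, stdPdf t = 1 := by
  have h : ∫ t : ℝ, Real.exp (-(1/2 : ℝ) * t ^ 2) = Real.sqrt (π / (1/2)) :=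
    integral_gaussian (1/2)
  have : ∫ t, stdPdf t = (Real.sqrt (2 * Real.pi))⁻¹ * Real.sqrt (π / (1/2)) := by
    simp_rw [stdPdf_eq]
    rw [integral_const_mul, h]
  rw [this]
  rw [show π / (1/2 : ℝ) = 2 * π by ring]
  rw [inv_mul_cancel₀]
  positivity

lemma stdCdf_nonneg (x : ℝ) : 0 ≤ stdCdf x :=
  setIntegral_nonneg measurableSet_Iic fun t _ => stdPdf_nonneg t

lemma stdCdf_mono : Monotone stdCdf := fun x y hxy =>
  setIntegral_mono_set stdPdf_integrable.integrableOn
    (Eventually.of_forall fun t => stdPdf_nonneg t)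
    (HasSubset.Subset.eventuallyLE (Iic_subset_Iic.mpr hxy))

lemma tendsto_stdCdf_atTop : Tendsto stdCdf atTop (nhds 1) := by
  have h := (MeasureTheory.aecover_Iic (μ := volume) (l := atTop)
      (b := fun x : ℝ => x) tendsto_id).integral_tendsto_of_countably_generated
      stdPdf_integrable
  rwa [integral_stdPdf] at h

lemma stdCdf_le_one (x : ℝ) : stdCdf x ≤ 1 := by
  have := ge_of_tendsto tendsto_stdCdf_atTop
    (eventually_atTop.mpr ⟨x, fun y hy => stdCdf_mono hy⟩)
  exact this

lemma tendsto_stdCdf_atBot : Tendsto stdCdf atBot (nhds 0) := by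
  have h := (MeasureTheory.aecover_Ioi (μ := volume) (l := atBot)
      (a := fun x : ℝ => x) tendsto_id).integral_tendsto_of_countably_generated
      stdPdf_integrable
  rw [integral_stdPdf] at h
  have heq : ∀ x : ℝ, stdCdf x = 1 - ∫ t in Set.Ioi x, stdPdf t := by
    intro x
    have := intervalIntegral.integral_Iic_add_Ioi (μ := volume) (b := x)
      stdPdf_integrable.integrableOn stdPdf_integrable.integrableOn
    rw [integral_stdPdf] at this
    unfold stdCdf
    linarith
  have h2 : Tendsto (fun x : ℝ => 1 - ∫ t in Set.Ioi x, stdPdf t) atBot (nhds (1 - 1)) :=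
    tendsto_const_nhds.sub h
  rw [sub_self] at h2
  exact h2.congr fun x => (heq x).symm

/-- Limiting behavior of θ̄₀: θ̄₀(x̄) → 0 as x̄ → −∞ and θ̄₀(x̄) → 1−δ as x̄ → +∞. -/
theorem stmt4 (δ σx : ℝ) (hδ0 : 0 < δ) (hδ1 : δ < 1) (hσx : 0 < σx)
    (θ0 : ℝ → ℝ)
    (hroot : ∀ xbar : ℝ, θ0 xbar - (1 - δ) * stdCdf ((xbar - θ0 xbar) / σx) = 0) :
    Filter.Tendsto θ0 atBot (nhds 0) ∧ Filter.Tendsto θ0 atTop (nhds (1 - δ)) := by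
  have hδ : 0 < 1 - δ := by linarith
  have heq : ∀ x, θ0 x = (1 - δ) * stdCdf ((x - θ0 x) / σx) := fun x => by
    have := hroot x; linarith
  have h0 : ∀ x, 0 ≤ θ0 x := fun x => by
    rw [heq x]; exact mul_nonneg hδ.le (stdCdf_nonneg _)
  have h1 : ∀ x, θ0 x ≤ 1 - δ := fun x => by
    rw [heq x]
    calc (1 - δ) * stdCdf ((x - θ0 x) / σx) ≤ (1 - δ) * 1 :=
      mul_le_mul_of_nonneg_left (stdCdf_le_one _) hδ.le
    _ = 1 - δ := mul_one _
  constructor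
  · -- atBot
    have hub : ∀ x, θ0 x ≤ (1 - δ) * stdCdf (x / σx) := by
      intro x
      rw [heq x]
      apply mul_le_mul_of_nonneg_left _ hδ.le
      apply stdCdf_mono
      apply div_le_div_of_nonneg_right _ hσx.le
      linarith [h0 x]
    have hlim : Tendsto (fun x => (1 - δ) * stdCdf (x / σx)) atBot (nhds 0) := by
      have : Tendsto (fun x : ℝ => x / σx) atBot atBot :=
        tendsto_id.atBot_div_const hσx
      have := tendsto_stdCdf_atBot.comp this
      simpa using (tendsto_const_nhds (x := (1 - δ))).mul this
    exact tendsto_of_tendsto_of_tendsto_of_le_of_le tendsto_const_nhds hlim h0 hub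
  · -- atTop
    have hlb : ∀ x, (1 - δ) * stdCdf ((x - (1 - δ)) / σx) ≤ θ0 x := by
      intro x
      rw [heq x]
      apply mul_le_mul_of_nonneg_left _ hδ.le
      apply stdCdf_mono
      apply div_le_div_of_nonneg_right _ hσx.le
      linarith [h1 x]
    have hlim : Tendsto (fun x => (1 - δ) * stdCdf ((x - (1 - δ)) / σx)) atTop (nhds (1 - δ)) := by
      have h1' : Tendsto (fun x : ℝ => (x - (1 - δ)) / σx) atTop atTop :=
        (tendsto_atTop_add_const_right atTop (-(1 - δ)) tendsto_id).atTop_div_const hσx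
      have := tendsto_stdCdf_atTop.comp h1'
      have := (tendsto_const_nhds (x := (1 - δ))).mul this
      simpa using this
    exact tendsto_of_tendsto_of_tendsto_of_le_of_le hlim tendsto_const_nhds hlb h1
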